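/- Let m ≥ 2 and let z, w ∈ {0,1}^m be distinct bit-strings. Let c_z = (z z̄)³ 1^{2m} and c_w = (w w̄)³ 1^{2m}, and let c_z′ (respectively c_w′) be obtained from c_z (respectively c_w) by flipping exactly one of its last 3 bits. Then the Hamming distance between c_z′ and c_w′ is at least 6. -/
import Mathlib


/-- The length-`8m` bit-string `(z z̄)³ 1^{2m}`: blocks `0,2,4` carry `z`,
blocks `1,3,5` carry the bitwise complement of `z`, and blocks `6,7` are all ones. -/
def cStr (m : ℕ) (z : Fin m → Bool) : Fin (8 * m) → Bool := fun p =>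
  if h : 0 < m then
    let b : ℕ := (p : ℕ) / m
    let o : Fin m := ⟨(p : ℕ) % m, Nat.mod_lt _ h⟩
    if 6 ≤ b then true else if b % 2 = 0 then z o else !(z o)
  else true

/-- Flip the bit at (absolute) position `q` of a length-`N` bit-string. -/
def flipAt (N : ℕ) (q : ℕ) (v : Fin N → Bool) : Fin N → Bool := fun i =>
  if (i : ℕ) = q then !(v i) else v i

lemma cStr_val (m : ℕ) (hm0 : 0 < m) (z : Fin m → Bool) (k : ℕ) (hk : k < 6)
    (j : Fin m) (p : Fin (8 * m)) (hp : (p : ℕ) = k * m + j) :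
    cStr m z p = if k % 2 = 0 then z j else !(z j) := by
  have hj := j.2
  have hdiv : (p : ℕ) / m = k := by
    rw [hp, Nat.mul_comm, Nat.mul_add_div hm0, Nat.div_eq_of_lt hj]
    omega
  have hmod : (p : ℕ) % m = (j : ℕ) := by
    rw [hp, Nat.mul_comm, Nat.mul_add_mod]
    exact Nat.mod_eq_of_lt hj
  simp only [cStr, dif_pos hm0, hdiv, hmod]
  rw [if_neg (by omega)]

/-- For `m ≥ 2` and distinct `z, w ∈ {0,1}^m`, if `c_z′` and `c_w′`
are obtained from `(z z̄)³ 1^{2m}` and `(w w̄)³ 1^{2m}` respectively by flipping exactly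
one of the last `3` bits, then the Hamming distance between `c_z′` and `c_w′` is at
least `6`. -/
theorem stmt14 (m : ℕ) (hm : 2 ≤ m) (z w : Fin m → Bool) (hzw : z ≠ w)
    (a b : ℕ) (ha : a < 3) (hb : b < 3) :
    6 ≤ hammingDist (flipAt (8 * m) (8 * m - 1 - a) (cStr m z))
        (flipAt (8 * m) (8 * m - 1 - b) (cStr m w)) := by
  obtain ⟨j, hj⟩ := Function.ne_iff.mp hzw
  have hm0 : 0 < m := by omega
  have hjm := j.2
  set f : Fin 6 → Fin (8 * m) := fun k =>
    ⟨(k : ℕ) * m + j, by have hk := k.2; nlinarith⟩ with hf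
  have hinj : Function.Injective f := by
    intro k l h
    simp only [hf, Fin.mk.injEq] at h
    have : (k : ℕ) * m = (l : ℕ) * m := by omega
    exact Fin.ext (Nat.eq_of_mul_eq_mul_right hm0 this)
  have hdiff : ∀ k : Fin 6,
      flipAt (8 * m) (8 * m - 1 - a) (cStr m z) (f k) ≠
      flipAt (8 * m) (8 * m - 1 - b) (cStr m w) (f k) := by
    intro k
    have hk6 := k.2
    have hsmall : ((f k : Fin (8 * m)) : ℕ) < 6 * m := by
      simp only [hf]; nlinarith
    have hz := cStr_val m hm0 z k hk6 j (f k) rfl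
    have hw := cStr_val m hm0 w k hk6 j (f k) rfl
    simp only [flipAt, if_neg (by omega : ¬ ((f k : Fin (8*m)) : ℕ) = 8 * m - 1 - a),
      if_neg (by omega : ¬ ((f k : Fin (8*m)) : ℕ) = 8 * m - 1 - b), hz, hw]
    rcases Nat.eq_zero_or_pos ((k : ℕ) % 2) with h | h
    · simp [h, hj]
    · rw [if_neg (by omega), if_neg (by omega)]
      simp [hj]
  calc 6 = (Finset.univ.image f).card := by
        rw [Finset.card_image_of_injective _ hinj, Finset.card_univ, Fintype.card_fin]
    _ ≤ hammingDist _ _ := by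
        apply Finset.card_le_card
        intro p hp
        simp only [Finset.mem_image, Finset.mem_univ, true_and] at hp
        obtain ⟨k, rfl⟩ := hp
        simpa [hammingDist] using hdiff k
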